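/- arXiv:2108.04168 — 8 statements merged into one kernel-verified Lean document; each statement's English description precedes it below -/
import Mathlib

section
/- Let (A,B) be a generic pair of flags in an m-dimensional R-vector space V over a skew field R, and let a,b ≥ 1 be integers with a+b = m+1. Then the two maps from A^{a-1} ∩ B^{b-1} to gr^a A = A^{a-1}/A^a and to gr^b B = B^{b-1}/B^b, each given by the inclusion into A^{a-1} (respectively B^{b-1}) followed by the quotient projection, are isomorphisms of left R-modules; in particular A^{a-1} ∩ B^{b-1} is an R-line. -/
/-!
Genericity for `(a, b - 1)` makes `A^a` a complement of `B^{b-1}`; by the modular law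
`A^{a-1} ∩ B^{b-1}` is then a complement of `A^a` inside `A^{a-1}`, so it maps isomorphically
onto `gr^a A`, which is a line because codimensions along a flag go up one at a time.
Symmetrically, genericity for `(a - 1, b)` handles `gr^b B`.
-/

/-- A flag in an `m`-dimensional `R`-vector space `V`: a chain
`V = A^0 ⊃ A^1 ⊃ ... ⊃ A^m = 0` of submodules in which `A^i` has codimension `i`. -/
structure IsFlag {R V : Type*} [DivisionRing R] [AddCommGroup V] [Module R V]
    (m : ℕ) (A : ℕ → Submodule R V) : Prop where
  top : A 0 = ⊤
  bot : A m = ⊥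
  antitone : ∀ ⦃i j : ℕ⦄, i ≤ j → j ≤ m → A j ≤ A i
  codim : ∀ i ≤ m, Module.finrank R (V ⧸ A i) = i

/-- A pair of flags `(A, B)` is generic if for all `a, b ≥ 0` with `a + b = m` the
natural map `V → V/A^a ⊕ V/B^b` induced by the quotient projections is an isomorphism. -/
def IsGenericPair {R V : Type*} [DivisionRing R] [AddCommGroup V] [Module R V]
    (m : ℕ) (A B : ℕ → Submodule R V) : Prop :=
  ∀ a b : ℕ, a + b = m →
    Function.Bijective ⇑(LinearMap.prod (A a).mkQ (B b).mkQ)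

open Function Submodule

namespace Submodule

variable {R V : Type*} [Ring R] [AddCommGroup V] [Module R V]

theorem isCompl_of_bijective_prod_mkQ {p q : Submodule R V}
    (h : Bijective (p.mkQ.prod q.mkQ)) : IsCompl p q := by
  refine ⟨?_, codisjoint_iff_exists_add_eq.mpr fun v => ?_⟩
  · rw [disjoint_iff, ← ker_mkQ p, ← ker_mkQ q, ← LinearMap.ker_prod,
      LinearMap.ker_eq_bot.mpr h.1]
  · obtain ⟨w, hw⟩ := h.2 (p.mkQ v, 0)
    simp only [LinearMap.prod_apply, Function.prod, Prod.mk.injEq, mkQ_apply,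
      Submodule.Quotient.eq, Quotient.mk_eq_zero] at hw
    exact ⟨v - w, w, sub_mem_comm_iff.mp hw.1, hw.2, sub_add_cancel v w⟩

-- `S` stands for `p ⊓ q` up to `inf_comm`, so that the lemma applies on either side of `A ⊓ B`.
theorem bijective_mkQ_comp_inclusion_of_isCompl {p p' q S : Submodule R V}
    (hp' : p' ≤ p) (hpq : IsCompl p' q) (hS : S = p ⊓ q) (hSp : S ≤ p) :
    Bijective ((p'.comap p.subtype).mkQ ∘ₗ inclusion hSp) := by
  subst hS
  refine ⟨fun x y hxy => ?_, fun z => ?_⟩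
  · have hxy : (x - y : V) ∈ p' ⊓ q :=
      ⟨(Submodule.Quotient.eq (p'.comap p.subtype)).mp hxy, sub_mem x.2.2 y.2.2⟩
    rw [hpq.inf_eq_bot, mem_bot, sub_eq_zero] at hxy
    exact Subtype.ext hxy
  · set w := quotientEquivOfIsCompl _ _ (isCompl_comap_subtype_of_isCompl_of_le hpq hp') z
    exact ⟨⟨w, w.1.2, w.2⟩, mk_quotientEquivOfIsCompl_apply _ z⟩

end Submodule

namespace IsFlag

variable {R V : Type*} [DivisionRing R] [AddCommGroup V] [Module R V]
  {m : ℕ} {A : ℕ → Submodule R V}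

theorem finrank_eq (hA : IsFlag m A) : Module.finrank R V = m := by
  rw [← (quotEquivOfEqBot _ hA.bot).finrank_eq, hA.codim m le_rfl]

theorem finiteDimensional (hA : IsFlag m A) : FiniteDimensional R V := by
  rcases Nat.eq_zero_or_pos m with rfl | hm
  · have : Subsingleton (Submodule R V) :=
      subsingleton_iff_bot_eq_top.mp (hA.bot.symm.trans hA.top)
    have : Subsingleton V := (Submodule.subsingleton_iff R).mp this
    infer_instance
  · exact Module.finite_of_finrank_pos (hA.finrank_eq ▸ hm)

theorem finrank_apply (hA : IsFlag m A) {i : ℕ} (hi : i ≤ m) :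
    Module.finrank R (A i) = m - i := by
  have := hA.finiteDimensional
  have h := (A i).finrank_quotient_add_finrank
  rw [hA.codim i hi, hA.finrank_eq] at h
  omega

theorem finrank_gr (hA : IsFlag m A) {i : ℕ} (h1 : 1 ≤ i) (hi : i ≤ m) :
    Module.finrank R (A (i - 1) ⧸ (A i).comap (A (i - 1)).subtype) = 1 := by
  have := hA.finiteDimensional
  have h := ((A i).comap (A (i - 1)).subtype).finrank_quotient_add_finrank
  rw [(comapSubtypeEquivOfLe (hA.antitone (Nat.sub_le i 1) hi)).finrank_eq,
    hA.finrank_apply hi, hA.finrank_apply (by omega)] at h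
  omega

end IsFlag

/-- For a generic pair of flags `(A, B)` and `a + b = m + 1` with `a, b ≥ 1`, the two maps
`A^{a-1} ⊓ B^{b-1} → gr^a A = A^{a-1}/A^a` and `A^{a-1} ⊓ B^{b-1} → gr^b B = B^{b-1}/B^b`,
given by inclusion followed by the quotient projection, are isomorphisms; in particular
`A^{a-1} ⊓ B^{b-1}` is an `R`-line. -/
theorem generic_pair_intersection_is_line
    {R V : Type*} [DivisionRing R] [AddCommGroup V] [Module R V]
    {m : ℕ} {A B : ℕ → Submodule R V}
    (hA : IsFlag m A) (hB : IsFlag m B) (hgen : IsGenericPair m A B)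
    {a b : ℕ} (ha : 1 ≤ a) (hb : 1 ≤ b) (hab : a + b = m + 1) :
    Function.Bijective
      ⇑((Submodule.comap (A (a - 1)).subtype (A a)).mkQ ∘ₗ
        Submodule.inclusion (show A (a - 1) ⊓ B (b - 1) ≤ A (a - 1) from inf_le_left)) ∧
    Function.Bijective
      ⇑((Submodule.comap (B (b - 1)).subtype (B b)).mkQ ∘ₗ
        Submodule.inclusion (show A (a - 1) ⊓ B (b - 1) ≤ B (b - 1) from inf_le_right)) ∧
    Module.finrank R ↥(A (a - 1) ⊓ B (b - 1)) = 1 := by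
  have hgrA := bijective_mkQ_comp_inclusion_of_isCompl (hA.antitone (Nat.sub_le a 1) (by omega))
    (isCompl_of_bijective_prod_mkQ (hgen a (b - 1) (by omega))) rfl inf_le_left
  have hgrB := bijective_mkQ_comp_inclusion_of_isCompl (hB.antitone (Nat.sub_le b 1) (by omega))
    (isCompl_of_bijective_prod_mkQ (hgen (a - 1) b (by omega))).symm (inf_comm _ _) inf_le_right
  refine ⟨hgrA, hgrB, ?_⟩
  rw [(LinearEquiv.ofBijective _ hgrA).finrank_eq]
  exact hA.finrank_gr ha (by omega)
end

section
/- Let R be a skew field, P a 2-dimensional R-vector space, and A, B, C three pairwise distinct 1-dimensional R-submodules of P. For two distinct lines X, Y among A, B, C, the composite X ↪ P → P/Y (inclusion followed by quotient projection) is an isomorphism; denote it p_{X,Y}. Then the composition p_{A,C}^{-1} ∘ p_{B,C} ∘ p_{B,A}^{-1} ∘ p_{C,A} ∘ p_{C,B}^{-1} ∘ p_{A,B} : A → A of the six isomorphisms A → P/B ← C → P/A ← B → P/C ← A equals minus the identity map of A. -/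
/-!
Each map `X → P/Y` sends a vector to its class, and its inverse picks the representative of a
class in the line `X`. Starting from `v ∈ A`, the chain picks `c ∈ C` with `c ≡ v mod B`, then
`b ∈ B` with `b ≡ c mod A`. Now `b - c + v` lies in `A` and, being `b - (c - v)`, in `B`, so it
vanishes since `A ∩ B = 0`; hence `b + v = c ∈ C`, i.e. `b ≡ -v mod C`. That the six maps are
isomorphisms is the fact that distinct lines in a plane are complementary.
-/

open Module Submodule

section Ring
variable {R P : Type*} [Ring R] [AddCommGroup P] [Module R P]

theorem LinearEquiv.apply_eq_mk_of_toLinearMap_eq {X Y : Submodule R P} (e : X ≃ₗ[R] P ⧸ Y)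
    (he : e.toLinearMap = Y.mkQ ∘ₗ X.subtype) (x : X) : e x = Submodule.Quotient.mk (x : P) :=
  LinearMap.congr_fun he x

theorem LinearEquiv.symm_mk_sub_mem_of_toLinearMap_eq {X Y : Submodule R P}
    (e : X ≃ₗ[R] P ⧸ Y) (he : e.toLinearMap = Y.mkQ ∘ₗ X.subtype) (x : P) :
    (e.symm (Submodule.Quotient.mk x) : P) - x ∈ Y := by
  rw [← Submodule.Quotient.eq, ← e.apply_eq_mk_of_toLinearMap_eq he, e.apply_symm_apply]

theorem six_quotient_isomorphisms_compose_to_neg {A B C : Submodule R P} (hAB : Disjoint A B)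
    (pAB : A ≃ₗ[R] P ⧸ B) (pCB : C ≃ₗ[R] P ⧸ B) (pCA : C ≃ₗ[R] P ⧸ A)
    (pBA : B ≃ₗ[R] P ⧸ A) (pBC : B ≃ₗ[R] P ⧸ C) (pAC : A ≃ₗ[R] P ⧸ C)
    (hpAB : pAB.toLinearMap = B.mkQ ∘ₗ A.subtype) (hpCB : pCB.toLinearMap = B.mkQ ∘ₗ C.subtype)
    (hpCA : pCA.toLinearMap = A.mkQ ∘ₗ C.subtype) (hpBA : pBA.toLinearMap = A.mkQ ∘ₗ B.subtype)
    (hpBC : pBC.toLinearMap = C.mkQ ∘ₗ B.subtype) (hpAC : pAC.toLinearMap = C.mkQ ∘ₗ A.subtype)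
    (v : A) : pAC.symm (pBC (pBA.symm (pCA (pCB.symm (pAB v))))) = -v := by
  set c := pCB.symm (pAB v)
  set b := pBA.symm (pCA c)
  have hc : (c : P) - v ∈ B := by
    simpa only [c, pAB.apply_eq_mk_of_toLinearMap_eq hpAB]
      using pCB.symm_mk_sub_mem_of_toLinearMap_eq hpCB v
  have hb : (b : P) - c ∈ A := by
    simpa only [b, pCA.apply_eq_mk_of_toLinearMap_eq hpCA]
      using pBA.symm_mk_sub_mem_of_toLinearMap_eq hpBA c
  have hbvc : (b : P) + v = c := by
    have h0 := disjoint_def.mp hAB _ (A.add_mem hb v.2)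
      (by simpa only [sub_sub_eq_add_sub, sub_add_eq_add_sub] using B.sub_mem b.2 hc)
    rwa [sub_add_eq_add_sub, sub_eq_zero] at h0
  rw [pAC.symm_apply_eq, pBC.apply_eq_mk_of_toLinearMap_eq hpBC,
    pAC.apply_eq_mk_of_toLinearMap_eq hpAC, Submodule.Quotient.eq, Submodule.coe_neg,
    sub_neg_eq_add, hbvc]
  exact c.2

end Ring

section DivisionRing
variable {R P : Type*} [DivisionRing R] [AddCommGroup P] [Module R P]

theorem Submodule.disjoint_of_finrank_eq_one [FiniteDimensional R P] {X Y : Submodule R P}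
    (hX : finrank R X = 1) (hY : finrank R Y = 1) (hXY : X ≠ Y) : Disjoint X Y := by
  have hlt : X ⊓ Y < X := inf_le_left.lt_of_ne fun h ↦
    hXY (eq_of_le_of_finrank_eq (inf_eq_left.mp h) (hX.trans hY.symm))
  have := finrank_lt_finrank_of_lt hlt
  rw [disjoint_iff, ← finrank_eq_zero]
  omega

theorem Submodule.isCompl_of_finrank_eq_one (hP : finrank R P = 2) {X Y : Submodule R P}
    (hX : finrank R X = 1) (hY : finrank R Y = 1) (hXY : X ≠ Y) : IsCompl X Y :=
  have : FiniteDimensional R P := .of_finrank_pos (by omega)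
  (isCompl_iff_disjoint X Y (by omega)).mpr (disjoint_of_finrank_eq_one hX hY hXY)

end DivisionRing

/-- Let `P` be a 2-dimensional vector space over a skew field `R` and `A`, `B`, `C`
three pairwise distinct lines in `P`.  Each composite `X ↪ P → P/Y` (inclusion followed
by projection), for distinct lines `X ≠ Y` among `A, B, C`, is an isomorphism, and the
composition `A → P/B ← C → P/A ← B → P/C ← A` of the six isomorphisms equals minus the
identity of `A`. -/
theorem six_line_isomorphisms_compose_to_minus_id
    {R P : Type*} [DivisionRing R] [AddCommGroup P] [Module R P]
    (hP : Module.finrank R P = 2)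
    (A B C : Submodule R P)
    (hA : Module.finrank R ↥A = 1) (hB : Module.finrank R ↥B = 1)
    (hC : Module.finrank R ↥C = 1)
    (hAB : A ≠ B) (hAC : A ≠ C) (hBC : B ≠ C) :
    ∃ (pAB : ↥A ≃ₗ[R] P ⧸ B) (pCB : ↥C ≃ₗ[R] P ⧸ B) (pCA : ↥C ≃ₗ[R] P ⧸ A)
      (pBA : ↥B ≃ₗ[R] P ⧸ A) (pBC : ↥B ≃ₗ[R] P ⧸ C) (pAC : ↥A ≃ₗ[R] P ⧸ C),
      pAB.toLinearMap = B.mkQ ∘ₗ A.subtype ∧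
      pCB.toLinearMap = B.mkQ ∘ₗ C.subtype ∧
      pCA.toLinearMap = A.mkQ ∘ₗ C.subtype ∧
      pBA.toLinearMap = A.mkQ ∘ₗ B.subtype ∧
      pBC.toLinearMap = C.mkQ ∘ₗ B.subtype ∧
      pAC.toLinearMap = C.mkQ ∘ₗ A.subtype ∧
      ∀ v : ↥A, pAC.symm (pBC (pBA.symm (pCA (pCB.symm (pAB v))))) = -v := by
  have isCompl {X Y : Submodule R P} (hX : finrank R X = 1) (hY : finrank R Y = 1)
      (hXY : X ≠ Y) : IsCompl X Y := isCompl_of_finrank_eq_one hP hX hY hXY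
  let pAB := (B.quotientEquivOfIsCompl A (isCompl hB hA hAB.symm)).symm
  let pCB := (B.quotientEquivOfIsCompl C (isCompl hB hC hBC)).symm
  let pCA := (A.quotientEquivOfIsCompl C (isCompl hA hC hAC)).symm
  let pBA := (A.quotientEquivOfIsCompl B (isCompl hA hB hAB)).symm
  let pBC := (C.quotientEquivOfIsCompl B (isCompl hC hB hBC.symm)).symm
  let pAC := (C.quotientEquivOfIsCompl A (isCompl hC hA hAC.symm)).symm
  exact ⟨pAB, pCB, pCA, pBA, pBC, pAC, rfl, rfl, rfl, rfl, rfl, rfl,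
    six_quotient_isomorphisms_compose_to_neg (isCompl hA hB hAB).disjoint
      pAB pCB pCA pBA pBC pAC rfl rfl rfl rfl rfl rfl⟩
end

section
/- Let (a1,a2), (b1,b2), (c1,c2) be three decorated flags in a 2-dimensional R-vector space V over a skew field R, whose flag lines Ra1, Rb1, Rc1 are pairwise distinct. Then the six invariants satisfy the six-term relation Δ(a1,b2) · Δ(c1,b2)^{-1} · Δ(c1,a2) · Δ(b1,a2)^{-1} · Δ(b1,c2) · Δ(a1,c2)^{-1} = -1 in R. -/
/-!
The ratio `Δ(u, v2) Δ(w, v2)⁻¹` of two invariants relative to the same flag is the coefficient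
`r` with `u - r • w ∈ R v1`. Since the classes of `b1` and `c1` in `V ⧸ R a1` are both multiples
of `a2`, this gives `c1 = α • a1 + β • b1` with `β = Δ(c1,a2) Δ(b1,a2)⁻¹`, and then
`Δ(c1,b2) Δ(a1,b2)⁻¹ = α` and, from `b1 + β⁻¹α • a1 = β⁻¹ • c1`, `Δ(b1,c2) Δ(a1,c2)⁻¹ = -β⁻¹α`.
Distinctness of the three lines makes `α, β` nonzero, and `α⁻¹ · β · (-β⁻¹α) = -1`.
-/

namespace Submodule

variable {R V : Type*} [DivisionRing R] [AddCommGroup V] [Module R V]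

theorem Quotient.mk_ne_zero_of_span_singleton_ne {x y : V} (hx : x ≠ 0)
    (h : span R {x} ≠ span R {y}) : (Submodule.Quotient.mk x : V ⧸ span R {y}) ≠ 0 := by
  rw [Ne, Submodule.Quotient.mk_eq_zero]
  rintro hxy
  obtain ⟨r, rfl⟩ := mem_span_singleton.1 hxy
  exact h (span_singleton_smul_eq (IsUnit.mk0 r (left_ne_zero_of_smul hx)) y)

theorem sub_smul_mem_span_singleton_iff {v u w : V} {x : V ⧸ span R {v}} {du dw r : R}
    (hu : Submodule.Quotient.mk u = du • x) (hw : Submodule.Quotient.mk w = dw • x)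
    (hw0 : (Submodule.Quotient.mk w : V ⧸ span R {v}) ≠ 0) :
    u - r • w ∈ span R {v} ↔ du * dw⁻¹ = r := by
  have hx : x ≠ 0 := right_ne_zero_of_smul (hw ▸ hw0)
  rw [mul_inv_eq_iff_eq_mul₀ (left_ne_zero_of_smul (hw ▸ hw0)), ← Submodule.Quotient.mk_eq_zero,
    Submodule.Quotient.mk_sub, Submodule.Quotient.mk_smul, hu, hw, smul_smul, ← sub_smul,
    smul_eq_zero_iff_left hx, sub_eq_zero]

theorem mul_inv_ne_zero_of_mk_ne_zero {v u w : V} {x : V ⧸ span R {v}} {du dw : R}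
    (hu : Submodule.Quotient.mk u = du • x) (hw : Submodule.Quotient.mk w = dw • x)
    (hu0 : (Submodule.Quotient.mk u : V ⧸ span R {v}) ≠ 0)
    (hw0 : (Submodule.Quotient.mk w : V ⧸ span R {v}) ≠ 0) :
    du * dw⁻¹ ≠ 0 :=
  mul_ne_zero (left_ne_zero_of_smul (hu ▸ hu0)) (inv_ne_zero (left_ne_zero_of_smul (hw ▸ hw0)))

end Submodule

open Submodule

theorem six_term_relation_of_decorated_flags_general
    {R V : Type*} [DivisionRing R] [AddCommGroup V] [Module R V]
    (a1 b1 c1 : V) (ha1 : a1 ≠ 0) (hb1 : b1 ≠ 0) (hc1 : c1 ≠ 0)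
    (a2 : V ⧸ Submodule.span R {a1}) (b2 : V ⧸ Submodule.span R {b1})
    (c2 : V ⧸ Submodule.span R {c1})
    (hab : Submodule.span R {a1} ≠ Submodule.span R {b1})
    (hac : Submodule.span R {a1} ≠ Submodule.span R {c1})
    (hbc : Submodule.span R {b1} ≠ Submodule.span R {c1})
    (Dab Dcb Dca Dba Dbc Dac : R)
    (hDab : (Submodule.Quotient.mk a1 : V ⧸ Submodule.span R {b1}) = Dab • b2)
    (hDcb : (Submodule.Quotient.mk c1 : V ⧸ Submodule.span R {b1}) = Dcb • b2)
    (hDca : (Submodule.Quotient.mk c1 : V ⧸ Submodule.span R {a1}) = Dca • a2)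
    (hDba : (Submodule.Quotient.mk b1 : V ⧸ Submodule.span R {a1}) = Dba • a2)
    (hDbc : (Submodule.Quotient.mk b1 : V ⧸ Submodule.span R {c1}) = Dbc • c2)
    (hDac : (Submodule.Quotient.mk a1 : V ⧸ Submodule.span R {c1}) = Dac • c2) :
    Dab * Dcb⁻¹ * Dca * Dba⁻¹ * Dbc * Dac⁻¹ = -1 := by
  have hab0 := Quotient.mk_ne_zero_of_span_singleton_ne ha1 hab
  have hba0 := Quotient.mk_ne_zero_of_span_singleton_ne hb1 hab.symm
  have hac0 := Quotient.mk_ne_zero_of_span_singleton_ne ha1 hac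
  have hca0 := Quotient.mk_ne_zero_of_span_singleton_ne hc1 hac.symm
  have hcb0 := Quotient.mk_ne_zero_of_span_singleton_ne hc1 hbc.symm
  set β := Dca * Dba⁻¹ with hβ
  have hβ0 : β ≠ 0 := mul_inv_ne_zero_of_mk_ne_zero hDca hDba hca0 hba0
  obtain ⟨α, hα⟩ := mem_span_singleton.1 <| (sub_smul_mem_span_singleton_iff hDca hDba hba0).2 rfl
  have hc : c1 = α • a1 + β • b1 := by rw [hα]; abel
  have hDcb_Dab : Dcb * Dab⁻¹ = α := (sub_smul_mem_span_singleton_iff hDcb hDab hab0).1 <|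
    mem_span_singleton.2 ⟨β, by rw [hc, add_sub_cancel_left]⟩
  have hα0 : α ≠ 0 := hDcb_Dab ▸ mul_inv_ne_zero_of_mk_ne_zero hDcb hDab hcb0 hab0
  have hDbc_Dac : Dbc * Dac⁻¹ = -(β⁻¹ * α) := (sub_smul_mem_span_singleton_iff hDbc hDac hac0).1 <|
    mem_span_singleton.2 ⟨β⁻¹, by
      rw [hc, smul_add, smul_smul, smul_smul, inv_mul_cancel₀ hβ0, one_smul, neg_smul,
        sub_neg_eq_add, add_comm]⟩
  calc Dab * Dcb⁻¹ * Dca * Dba⁻¹ * Dbc * Dac⁻¹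
      = (Dcb * Dab⁻¹)⁻¹ * β * (Dbc * Dac⁻¹) := by simp only [hβ, mul_inv_rev, inv_inv, mul_assoc]
    _ = α⁻¹ * β * -(β⁻¹ * α) := by rw [hDcb_Dab, hDbc_Dac]
    _ = -1 := by
      rw [mul_neg, mul_assoc, ← mul_assoc β, mul_inv_cancel₀ hβ0, one_mul, inv_mul_cancel₀ hα0]

/-- The six-term relation for a triple of decorated flags `(a1,a2), (b1,b2), (c1,c2)`
in a 2-dimensional vector space over a skew field `R`:
`Δ(a1,b2)·Δ(c1,b2)⁻¹·Δ(c1,a2)·Δ(b1,a2)⁻¹·Δ(b1,c2)·Δ(a1,c2)⁻¹ = -1`,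
where `Δ(u,v2)` is defined by `[u] = Δ(u,v2) • v2` in `V ⧸ R·v1`. -/
theorem six_term_relation_of_decorated_flags
    {R V : Type*} [DivisionRing R] [AddCommGroup V] [Module R V]
    (hV : Module.finrank R V = 2)
    (a1 b1 c1 : V) (ha1 : a1 ≠ 0) (hb1 : b1 ≠ 0) (hc1 : c1 ≠ 0)
    (a2 : V ⧸ Submodule.span R {a1}) (b2 : V ⧸ Submodule.span R {b1})
    (c2 : V ⧸ Submodule.span R {c1})
    (ha2 : a2 ≠ 0) (hb2 : b2 ≠ 0) (hc2 : c2 ≠ 0)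
    (hab : Submodule.span R {a1} ≠ Submodule.span R {b1})
    (hac : Submodule.span R {a1} ≠ Submodule.span R {c1})
    (hbc : Submodule.span R {b1} ≠ Submodule.span R {c1})
    (Dab Dcb Dca Dba Dbc Dac : R)
    (hDab : (Submodule.Quotient.mk a1 : V ⧸ Submodule.span R {b1}) = Dab • b2)
    (hDcb : (Submodule.Quotient.mk c1 : V ⧸ Submodule.span R {b1}) = Dcb • b2)
    (hDca : (Submodule.Quotient.mk c1 : V ⧸ Submodule.span R {a1}) = Dca • a2)
    (hDba : (Submodule.Quotient.mk b1 : V ⧸ Submodule.span R {a1}) = Dba • a2)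
    (hDbc : (Submodule.Quotient.mk b1 : V ⧸ Submodule.span R {c1}) = Dbc • c2)
    (hDac : (Submodule.Quotient.mk a1 : V ⧸ Submodule.span R {c1}) = Dac • c2) :
    Dab * Dcb⁻¹ * Dca * Dba⁻¹ * Dbc * Dac⁻¹ = -1 :=
  six_term_relation_of_decorated_flags_general a1 b1 c1 ha1 hb1 hc1 a2 b2 c2 hab hac hbc Dab Dcb Dca
    Dba Dbc Dac hDab hDcb hDca hDba hDbc hDac
end

section
/- Let (a1,a2), (b1,b2), (c1,c2), (d1,d2) be four decorated flags in a 2-dimensional R-vector space V over a skew field R, whose flag lines Ra1, Rb1, Rc1, Rd1 are pairwise distinct. Then the quantum Plücker relation holds: Δ(a1,c2) = Δ(a1,b2)·Δ(b2,d1)·Δ(d1,c2) + Δ(a1,d2)·Δ(d2,b1)·Δ(b1,c2), where Δ(b2,d1) := Δ(d1,b2)^{-1} and Δ(d2,b1) := Δ(b1,d2)^{-1}. -/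
/-!
Since the lines `R b1` and `R d1` are distinct, `b1, d1` is a basis of `V`; write
`a1 = x • b1 + y • d1`. The map `u ↦ Δ(u, c2)` is `R`-linear and kills `c1`, so projecting this
single identity to `V ⧸ R b1`, `V ⧸ R d1` and `V ⧸ R c1` gives `Δ(a1,b2) = y Δ(d1,b2)`,
`Δ(a1,d2) = x Δ(b1,d2)` and `Δ(a1,c2) = x Δ(b1,c2) + y Δ(d1,c2)`. Eliminating `x` and `y` is the
relation; the noncommutativity of `R` is harmless because the coefficients always act on the left.
-/

open Submodule Module

section

variable {R V : Type*} [DivisionRing R] [AddCommGroup V] [Module R V]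

theorem notMem_span_singleton_of_span_singleton_ne {v w : V} (hv : v ≠ 0)
    (h : span R {w} ≠ span R {v}) : v ∉ span R {w} := by
  intro hmem
  obtain ⟨a, rfl⟩ := mem_span_singleton.1 hmem
  have ha : a ≠ 0 := by rintro rfl; exact hv (zero_smul R w)
  exact h (span_singleton_smul_eq (IsUnit.mk0 a ha) w).symm

theorem linearIndependent_pair_of_span_singleton_ne {v w : V} (hv : v ≠ 0) (hw : w ≠ 0)
    (h : span R {v} ≠ span R {w}) : LinearIndependent R ![v, w] :=
  (LinearIndependent.pair_iff' hv).2 fun a ha =>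
    notMem_span_singleton_of_span_singleton_ne hw h (ha ▸ mem_span_singleton.2 ⟨a, rfl⟩)

theorem span_pair_eq_top_of_finrank_eq_two (hV : finrank R V = 2) {v w : V} (hv : v ≠ 0)
    (hw : w ≠ 0) (h : span R {v} ≠ span R {w}) : span R {v, w} = ⊤ := by
  simpa [Matrix.range_cons, Set.union_singleton, Set.pair_comm] using
    (linearIndependent_pair_of_span_singleton_ne hv hw h).span_eq_top_of_card_eq_finrank
      (by simp [hV])

theorem coeff_ne_zero_of_mk_eq_smul {W : Submodule R V} {q : V ⧸ W} {v : V} {r : R}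
    (hv : v ∉ W) (h : Submodule.Quotient.mk v = r • q) : r ≠ 0 := by
  rintro rfl
  exact hv ((Quotient.mk_eq_zero W).1 (by rw [h, zero_smul]))

theorem coeff_eq_add_of_mk_eq_smul {W : Submodule R V} {q : V ⧸ W} (hq : q ≠ 0)
    {u v w : V} {x y r s t : R} (huvw : x • v + y • w = u)
    (hu : Submodule.Quotient.mk u = t • q) (hv : Submodule.Quotient.mk v = r • q)
    (hw : Submodule.Quotient.mk w = s • q) :
    t = x * r + y * s := by
  refine smul_left_injective R hq ?_
  simp only [← hu, ← huvw, Quotient.mk_add, Quotient.mk_smul, hv, hw, add_smul, mul_smul]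

theorem mk_self_eq_zero_smul (v : V) (q : V ⧸ span R {v}) :
    (Submodule.Quotient.mk v : V ⧸ span R {v}) = (0 : R) • q := by
  rw [zero_smul, Quotient.mk_eq_zero]
  exact mem_span_singleton_self v

end

theorem quantum_pluecker_relation_general
    {R V : Type*} [DivisionRing R] [AddCommGroup V] [Module R V]
    (hV : Module.finrank R V = 2)
    (a1 b1 c1 d1 : V) (hb1 : b1 ≠ 0) (hd1 : d1 ≠ 0)
    (b2 : V ⧸ Submodule.span R {b1})
    (c2 : V ⧸ Submodule.span R {c1}) (d2 : V ⧸ Submodule.span R {d1})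
    (hb2 : b2 ≠ 0) (hc2 : c2 ≠ 0) (hd2 : d2 ≠ 0)
    (hbd : Submodule.span R {b1} ≠ Submodule.span R {d1})
    (Dac Dab Ddb Ddc Dad Dbd Dbc : R)
    (hDac : (Submodule.Quotient.mk a1 : V ⧸ Submodule.span R {c1}) = Dac • c2)
    (hDab : (Submodule.Quotient.mk a1 : V ⧸ Submodule.span R {b1}) = Dab • b2)
    (hDdb : (Submodule.Quotient.mk d1 : V ⧸ Submodule.span R {b1}) = Ddb • b2)
    (hDdc : (Submodule.Quotient.mk d1 : V ⧸ Submodule.span R {c1}) = Ddc • c2)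
    (hDad : (Submodule.Quotient.mk a1 : V ⧸ Submodule.span R {d1}) = Dad • d2)
    (hDbd : (Submodule.Quotient.mk b1 : V ⧸ Submodule.span R {d1}) = Dbd • d2)
    (hDbc : (Submodule.Quotient.mk b1 : V ⧸ Submodule.span R {c1}) = Dbc • c2) :
    Dac = Dab * Ddb⁻¹ * Ddc + Dad * Dbd⁻¹ * Dbc := by
  have ha1 : a1 ∈ span R {b1, d1} := span_pair_eq_top_of_finrank_eq_two hV hb1 hd1 hbd ▸ mem_top
  obtain ⟨x, y, hxy⟩ := mem_span_pair.1 ha1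
  have hDab' : Dab = y * Ddb := by
    simpa only [mul_zero, zero_add] using
      coeff_eq_add_of_mk_eq_smul hb2 hxy hDab (mk_self_eq_zero_smul b1 b2) hDdb
  have hDad' : Dad = x * Dbd := by
    simpa only [mul_zero, add_zero] using
      coeff_eq_add_of_mk_eq_smul hd2 hxy hDad hDbd (mk_self_eq_zero_smul d1 d2)
  have hDac' : Dac = x * Dbc + y * Ddc := coeff_eq_add_of_mk_eq_smul hc2 hxy hDac hDbc hDdc
  have hDdb0 : Ddb ≠ 0 :=
    coeff_ne_zero_of_mk_eq_smul (notMem_span_singleton_of_span_singleton_ne hd1 hbd) hDdb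
  have hDbd0 : Dbd ≠ 0 :=
    coeff_ne_zero_of_mk_eq_smul (notMem_span_singleton_of_span_singleton_ne hb1 hbd.symm) hDbd
  rw [hDac', hDab', hDad', mul_inv_cancel_right₀ hDdb0,
    mul_inv_cancel_right₀ hDbd0, add_comm]

/-- The quantum Plücker relation for four decorated flags `(a1,a2), ..., (d1,d2)` in a
2-dimensional vector space over a skew field `R` with pairwise distinct flag lines:
`Δ(a1,c2) = Δ(a1,b2)·Δ(d1,b2)⁻¹·Δ(d1,c2) + Δ(a1,d2)·Δ(b1,d2)⁻¹·Δ(b1,c2)`,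
where `Δ(u,v2)` is defined by `[u] = Δ(u,v2) • v2` in `V ⧸ R·v1`. -/
theorem quantum_pluecker_relation
    {R V : Type*} [DivisionRing R] [AddCommGroup V] [Module R V]
    (hV : Module.finrank R V = 2)
    (a1 b1 c1 d1 : V) (ha1 : a1 ≠ 0) (hb1 : b1 ≠ 0) (hc1 : c1 ≠ 0) (hd1 : d1 ≠ 0)
    (a2 : V ⧸ Submodule.span R {a1}) (b2 : V ⧸ Submodule.span R {b1})
    (c2 : V ⧸ Submodule.span R {c1}) (d2 : V ⧸ Submodule.span R {d1})
    (ha2 : a2 ≠ 0) (hb2 : b2 ≠ 0) (hc2 : c2 ≠ 0) (hd2 : d2 ≠ 0)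
    (hab : Submodule.span R {a1} ≠ Submodule.span R {b1})
    (hac : Submodule.span R {a1} ≠ Submodule.span R {c1})
    (had : Submodule.span R {a1} ≠ Submodule.span R {d1})
    (hbc : Submodule.span R {b1} ≠ Submodule.span R {c1})
    (hbd : Submodule.span R {b1} ≠ Submodule.span R {d1})
    (hcd : Submodule.span R {c1} ≠ Submodule.span R {d1})
    (Dac Dab Ddb Ddc Dad Dbd Dbc : R)
    (hDac : (Submodule.Quotient.mk a1 : V ⧸ Submodule.span R {c1}) = Dac • c2)
    (hDab : (Submodule.Quotient.mk a1 : V ⧸ Submodule.span R {b1}) = Dab • b2)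
    (hDdb : (Submodule.Quotient.mk d1 : V ⧸ Submodule.span R {b1}) = Ddb • b2)
    (hDdc : (Submodule.Quotient.mk d1 : V ⧸ Submodule.span R {c1}) = Ddc • c2)
    (hDad : (Submodule.Quotient.mk a1 : V ⧸ Submodule.span R {d1}) = Dad • d2)
    (hDbd : (Submodule.Quotient.mk b1 : V ⧸ Submodule.span R {d1}) = Dbd • d2)
    (hDbc : (Submodule.Quotient.mk b1 : V ⧸ Submodule.span R {c1}) = Dbc • c2) :
    Dac = Dab * Ddb⁻¹ * Ddc + Dad * Dbd⁻¹ * Dbc :=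
  quantum_pluecker_relation_general hV a1 b1 c1 d1 hb1 hd1 b2 c2 d2 hb2 hc2 hd2 hbd Dac Dab Ddb Ddc
    Dad Dbd Dbc hDac hDab hDdb hDdc hDad hDbd hDbc
end

section
/- Let R be a skew field and x, y, z, w units of R such that 1 + zwxy is a unit (equivalently, each of 1+wxyz, 1+xyzw, 1+yzwx is a unit, these elements being pairwise conjugate). Define x̄ := (1 + (zwxy)^{-1})·z, ȳ := (1 + wxyz)^{-1}·w, z̄ := (1 + (xyzw)^{-1})·x, w̄ := (1 + yzwx)^{-1}·y. Then x̄·ȳ·z̄·w̄ = (zwxy)^{-1}. -/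
/-! Put `a = zwxy`. Then `1 + a⁻¹ = a⁻¹(1 + a)`, and the push-through identity
`(1 + pq)p = p(1 + qp)` with `p = z`, `q = wxy` turns `x̄ȳ` into `a⁻¹zw`; likewise `z̄w̄ = (xyzw)⁻¹xy`.
As `(xyzw)⁻¹ = w⁻¹z⁻¹(xy)⁻¹`, the product `a⁻¹zw(xyzw)⁻¹xy` collapses to `a⁻¹`.
If one of the variables vanishes, both sides are `0`. -/

section DivisionRing

variable {R : Type*} [DivisionRing R]

theorem one_add_mul_mul_eq_mul_one_add_mul (p q : R) : (1 + p * q) * p = p * (1 + q * p) := by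
  noncomm_ring

theorem one_add_mul_comm_ne_zero {p q : R} (hp : p ≠ 0) (h : 1 + p * q ≠ 0) :
    1 + q * p ≠ 0 := by
  intro hc
  apply mul_ne_zero h hp
  rw [one_add_mul_mul_eq_mul_one_add_mul, hc, mul_zero]

theorem one_add_inv_mul_mul_inv_one_add_mul {p q : R} (hpq : p * q ≠ 0) (h : 1 + p * q ≠ 0) :
    (1 + (p * q)⁻¹) * p * (1 + q * p)⁻¹ = (p * q)⁻¹ * p := by
  have hqp : 1 + q * p ≠ 0 := one_add_mul_comm_ne_zero (left_ne_zero_of_mul hpq) h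
  have hfactor : 1 + (p * q)⁻¹ = (p * q)⁻¹ * (1 + p * q) := by
    rw [mul_add, mul_one, inv_mul_cancel₀ hpq, add_comm]
  rw [hfactor, mul_assoc _ (1 + p * q), one_add_mul_mul_eq_mul_one_add_mul, mul_assoc, mul_assoc,
    mul_inv_cancel₀ hqp, mul_one]

end DivisionRing

theorem flipped_monodromy_product_general
    {R : Type*} [DivisionRing R]
    (x y z w : R) (h : IsUnit (1 + z * w * x * y)) :
    ((1 + (z * w * x * y)⁻¹) * z) * ((1 + w * x * y * z)⁻¹ * w) *
      ((1 + (x * y * z * w)⁻¹) * x) * ((1 + y * z * w * x)⁻¹ * y) =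
    (z * w * x * y)⁻¹ := by
  rcases eq_or_ne (z * w * x * y) 0 with ha | ha
  · -- each flipped coordinate ends in its own variable, one of which vanishes
    rw [ha, inv_zero]
    simp only [mul_eq_zero] at ha
    rcases ha with ((rfl | rfl) | rfl) | rfl <;> simp
  · simp only [ne_eq, mul_eq_zero, not_or] at ha
    obtain ⟨⟨⟨hz, hw⟩, hx⟩, hy⟩ := ha
    have hzwxy : 1 + (z * w) * (x * y) ≠ 0 := by simpa only [mul_assoc] using h.ne_zero
    have hxyzw : 1 + (x * y) * (z * w) ≠ 0 := one_add_mul_comm_ne_zero (mul_ne_zero hz hw) hzwxy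
    have hflip_xy := one_add_inv_mul_mul_inv_one_add_mul (p := z) (q := w * x * y)
      (by simp only [mul_ne_zero_iff]; tauto) (by simpa only [mul_assoc] using hzwxy)
    have hflip_zw := one_add_inv_mul_mul_inv_one_add_mul (p := x) (q := y * z * w)
      (by simp only [mul_ne_zero_iff]; tauto) (by simpa only [mul_assoc] using hxyzw)
    simp only [← mul_assoc] at hflip_xy hflip_zw
    calc _ = (1 + (z * w * x * y)⁻¹) * z * (1 + w * x * y * z)⁻¹ * w *
          ((1 + (x * y * z * w)⁻¹) * x * (1 + y * z * w * x)⁻¹) * y := by simp only [mul_assoc]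
      _ = (z * w * x * y)⁻¹ * z * w * ((x * y * z * w)⁻¹ * x) * y := by rw [hflip_xy, hflip_zw]
      _ = (z * w * x * y)⁻¹ := by simp [mul_assoc, hx, hy, hz, hw]

/-- For units `x, y, z, w` of a skew field `R` with `1 + zwxy` a unit, the flipped
coordinates `x̄ = (1+(zwxy)⁻¹)z`, `ȳ = (1+wxyz)⁻¹w`, `z̄ = (1+(xyzw)⁻¹)x`,
`w̄ = (1+yzwx)⁻¹y` satisfy `x̄·ȳ·z̄·w̄ = (zwxy)⁻¹`. -/
theorem flipped_monodromy_product
    {R : Type*} [DivisionRing R]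
    (x y z w : R) (hx : IsUnit x) (hy : IsUnit y) (hz : IsUnit z) (hw : IsUnit w)
    (h : IsUnit (1 + z * w * x * y)) :
    ((1 + (z * w * x * y)⁻¹) * z) * ((1 + w * x * y * z)⁻¹ * w) *
      ((1 + (x * y * z * w)⁻¹) * x) * ((1 + y * z * w * x)⁻¹ * y) =
    (z * w * x * y)⁻¹ :=
  flipped_monodromy_product_general x y z w h
end

section
/- Let R be a skew field and a1, a2, a3, a4 units of R. For i ∈ Z/4Z set A_i := a_i·a_{i+1}·a_{i+2}·a_{i+3} (indices mod 4), and assume 1 + A_1 is a unit (equivalently each 1 + A_i is a unit, these elements being pairwise conjugate since a_i·A_{i+1} = A_i·a_i). Define b_1 := (1 + A_3^{-1})·a_3, b_2 := (1 + A_4)^{-1}·a_4, b_3 := (1 + A_1^{-1})·a_1, b_4 := (1 + A_2)^{-1}·a_2, and B_i := b_i·b_{i+1}·b_{i+2}·b_{i+3}. Then each 1 + B_i is a unit and the a-coordinates are recovered by the inverse transformation of the same shape: a_1 = b_3·(1 + B_4)^{-1}, a_2 = b_4·(1 + B_1^{-1}), a_3 = b_1·(1 + B_2)^{-1}, a_4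 = b_2·(1 + B_3^{-1}); that is, the square of the two-by-two move on A-coordinates is the identity. -/
/-!
The heart of the computation is the push-through identity `x (1 + y x) = (1 + x y) x`, applied
with `x = a_i` and `y = a_{i+1} a_{i+2} a_{i+3}`, so that `x y = A_i` and `y x = A_{i+1}`. It makes
the `1 + A_i` nonzero together and gives `b_i b_{i+1} = (a_{i+2} a_{i+3})⁻¹`, hence
`B_i = A_{i+2}⁻¹`. The inverse move then reads `a_1 = (1 + A_1⁻¹) a_1 (1 + A_2⁻¹)⁻¹`,
`a_2 = (1 + A_2)⁻¹ a_2 (1 + A_3)`, etc., which is push-through once more.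
-/

section GroupWithZero

variable {G : Type*} [GroupWithZero G] {a x y : G}

theorem SemiconjBy.mul_mul_inv_cancel (h : SemiconjBy a x y) (hy : y ≠ 0) :
    y * a * x⁻¹ = a := by
  rw [mul_assoc, h.inv_right₀.eq, ← mul_assoc, mul_inv_cancel₀ hy, one_mul]

theorem SemiconjBy.inv_mul_mul_cancel (h : SemiconjBy a x y) (hy : y ≠ 0) :
    y⁻¹ * a * x = a := by
  rw [mul_assoc, h.eq, inv_mul_cancel_left₀ hy]

end GroupWithZero

section PushThrough

variable {R : Type*} [DivisionRing R]

theorem semiconjBy_one_add_mul_swap (x y : R) : SemiconjBy x (1 + y * x) (1 + x * y) :=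
  (SemiconjBy.one_right x).add_right (mul_assoc x y x).symm

theorem semiconjBy_one_add_inv_mul_swap (x y : R) :
    SemiconjBy x (1 + (y * x)⁻¹) (1 + (x * y)⁻¹) :=
  (SemiconjBy.one_right x).add_right (SemiconjBy.inv_right₀ (mul_assoc x y x).symm)

theorem one_add_mul_swap_ne_zero {x y : R} (h : 1 + x * y ≠ 0) : 1 + y * x ≠ 0 := by
  rcases eq_or_ne x 0 with rfl | hx
  · simp
  · intro h0
    apply mul_ne_zero h hx
    rw [← (semiconjBy_one_add_mul_swap x y).eq, h0, mul_zero]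

theorem one_add_inv_eq_inv_mul {x : R} (hx : x ≠ 0) : 1 + x⁻¹ = x⁻¹ * (1 + x) := by
  rw [mul_add, mul_one, inv_mul_cancel₀ hx, add_comm]

theorem one_add_inv_eq_mul_inv {x : R} (hx : x ≠ 0) : 1 + x⁻¹ = (1 + x) * x⁻¹ := by
  rw [add_mul, one_mul, mul_inv_cancel₀ hx, add_comm]

theorem one_add_inv_ne_zero {x : R} (h : 1 + x ≠ 0) : 1 + x⁻¹ ≠ 0 := by
  rcases eq_or_ne x 0 with rfl | hx
  · simp
  · rw [one_add_inv_eq_inv_mul hx]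
    exact mul_ne_zero (inv_ne_zero hx) h

theorem one_add_inv_mul_inv_one_add {x : R} (hx : x ≠ 0) (h : 1 + x ≠ 0) :
    (1 + x⁻¹) * (1 + x)⁻¹ = x⁻¹ := by
  rw [one_add_inv_eq_inv_mul hx, mul_inv_cancel_right₀ h]

theorem inv_one_add_mul_one_add_inv {x : R} (hx : x ≠ 0) (h : 1 + x ≠ 0) :
    (1 + x)⁻¹ * (1 + x⁻¹) = x⁻¹ := by
  rw [one_add_inv_eq_mul_inv hx, inv_mul_cancel_left₀ h]

end PushThrough

section Quadruple

variable {R : Type*} [DivisionRing R] {a b c d : R}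

theorem semiconjBy_one_add_rotate (a b c d : R) :
    SemiconjBy a (1 + b * c * d * a) (1 + a * b * c * d) := by
  simpa only [mul_assoc] using semiconjBy_one_add_mul_swap a (b * c * d)

theorem semiconjBy_one_add_inv_rotate (a b c d : R) :
    SemiconjBy a (1 + (b * c * d * a)⁻¹) (1 + (a * b * c * d)⁻¹) := by
  simpa only [mul_assoc] using semiconjBy_one_add_inv_mul_swap a (b * c * d)

theorem one_add_rotate_ne_zero (h : 1 + a * b * c * d ≠ 0) : 1 + b * c * d * a ≠ 0 := by
  simpa only [mul_assoc] using one_add_mul_swap_ne_zero (x := a) (y := b * c * d)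
    (by simpa only [mul_assoc] using h)

theorem inv_mul_four_mul_mul (ha : a ≠ 0) (hb : b ≠ 0) :
    (a * b * c * d)⁻¹ * a * b = (c * d)⁻¹ := by
  rw [mul_assoc (a * b) c d, mul_inv_rev, mul_assoc _ a b,
    inv_mul_cancel_right₀ (mul_ne_zero ha hb)]

theorem one_add_inv_mul_mul_inv_one_add_rotate_mul (ha : a ≠ 0) (hb : b ≠ 0) (hc : c ≠ 0)
    (hd : d ≠ 0) (h : 1 + a * b * c * d ≠ 0) :
    (1 + (a * b * c * d)⁻¹) * a * ((1 + b * c * d * a)⁻¹ * b) = (c * d)⁻¹ :=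
  calc (1 + (a * b * c * d)⁻¹) * a * ((1 + b * c * d * a)⁻¹ * b)
      _ = (1 + (a * b * c * d)⁻¹) * (a * (1 + b * c * d * a)⁻¹) * b := by
        simp only [mul_assoc]
      _ = (1 + (a * b * c * d)⁻¹) * (1 + a * b * c * d)⁻¹ * a * b := by
        rw [(semiconjBy_one_add_rotate a b c d).inv_right₀.eq]; simp only [mul_assoc]
      _ = (c * d)⁻¹ := by
        rw [one_add_inv_mul_inv_one_add (by simp [*]) h, inv_mul_four_mul_mul ha hb]

theorem inv_one_add_mul_mul_one_add_inv_rotate_mul (ha : a ≠ 0) (hb : b ≠ 0) (hc : c ≠ 0)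
    (hd : d ≠ 0) (h : 1 + a * b * c * d ≠ 0) :
    (1 + a * b * c * d)⁻¹ * a * ((1 + (b * c * d * a)⁻¹) * b) = (c * d)⁻¹ :=
  calc (1 + a * b * c * d)⁻¹ * a * ((1 + (b * c * d * a)⁻¹) * b)
      _ = (1 + a * b * c * d)⁻¹ * (a * (1 + (b * c * d * a)⁻¹)) * b := by
        simp only [mul_assoc]
      _ = (1 + a * b * c * d)⁻¹ * (1 + (a * b * c * d)⁻¹) * a * b := by
        rw [(semiconjBy_one_add_inv_rotate a b c d).eq]; simp only [mul_assoc]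
      _ = (c * d)⁻¹ := by
        rw [inv_one_add_mul_one_add_inv (by simp [*]) h, inv_mul_four_mul_mul ha hb]

theorem mul_four_eq_inv_of_mul_eq_inv {p q r s : R} (hpq : p * q = (a * b)⁻¹)
    (hrs : r * s = (c * d)⁻¹) : p * q * r * s = (c * d * a * b)⁻¹ := by
  rw [mul_assoc (p * q), hpq, hrs, ← mul_inv_rev]
  simp only [mul_assoc]

end Quadruple

/-- The square of the two-by-two move on `A`-coordinates is the identity: for units
`a1, ..., a4` of a skew field with `1 + A_1` a unit (`A_i := a_i a_{i+1} a_{i+2} a_{i+3}`,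
indices mod 4), defining `b_1 = (1+A_3⁻¹)a_3`, `b_2 = (1+A_4)⁻¹a_4`, `b_3 = (1+A_1⁻¹)a_1`,
`b_4 = (1+A_2)⁻¹a_2` and `B_i := b_i b_{i+1} b_{i+2} b_{i+3}`, each `1 + B_i` is a unit
and `a_1 = b_3(1+B_4)⁻¹`, `a_2 = b_4(1+B_1⁻¹)`, `a_3 = b_1(1+B_2)⁻¹`, `a_4 = b_2(1+B_3⁻¹)`. -/
theorem two_by_two_move_is_involution_on_A_coordinates
    {R : Type*} [DivisionRing R]
    (a1 a2 a3 a4 : R)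
    (ha1 : IsUnit a1) (ha2 : IsUnit a2) (ha3 : IsUnit a3) (ha4 : IsUnit a4)
    (A1 A2 A3 A4 : R)
    (hA1 : A1 = a1 * a2 * a3 * a4) (hA2 : A2 = a2 * a3 * a4 * a1)
    (hA3 : A3 = a3 * a4 * a1 * a2) (hA4 : A4 = a4 * a1 * a2 * a3)
    (hu : IsUnit (1 + A1))
    (b1 b2 b3 b4 : R)
    (hb1 : b1 = (1 + A3⁻¹) * a3) (hb2 : b2 = (1 + A4)⁻¹ * a4)
    (hb3 : b3 = (1 + A1⁻¹) * a1) (hb4 : b4 = (1 + A2)⁻¹ * a2)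
    (B1 B2 B3 B4 : R)
    (hB1 : B1 = b1 * b2 * b3 * b4) (hB2 : B2 = b2 * b3 * b4 * b1)
    (hB3 : B3 = b3 * b4 * b1 * b2) (hB4 : B4 = b4 * b1 * b2 * b3) :
    IsUnit (1 + B1) ∧ IsUnit (1 + B2) ∧ IsUnit (1 + B3) ∧ IsUnit (1 + B4) ∧
    a1 = b3 * (1 + B4)⁻¹ ∧ a2 = b4 * (1 + B1⁻¹) ∧
    a3 = b1 * (1 + B2)⁻¹ ∧ a4 = b2 * (1 + B3⁻¹) := by
  subst hA1 hA2 hA3 hA4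
  have h1 := ha1.ne_zero
  have h2 := ha2.ne_zero
  have h3 := ha3.ne_zero
  have h4 := ha4.ne_zero
  have hu1 : 1 + a1 * a2 * a3 * a4 ≠ 0 := hu.ne_zero
  have hu2 := one_add_rotate_ne_zero hu1
  have hu3 := one_add_rotate_ne_zero hu2
  have hu4 := one_add_rotate_ne_zero hu3
  have hb12 : b1 * b2 = (a1 * a2)⁻¹ := by
    rw [hb1, hb2]; exact one_add_inv_mul_mul_inv_one_add_rotate_mul h3 h4 h1 h2 hu3
  have hb23 : b2 * b3 = (a2 * a3)⁻¹ := by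
    rw [hb2, hb3]; exact inv_one_add_mul_mul_one_add_inv_rotate_mul h4 h1 h2 h3 hu4
  have hb34 : b3 * b4 = (a3 * a4)⁻¹ := by
    rw [hb3, hb4]; exact one_add_inv_mul_mul_inv_one_add_rotate_mul h1 h2 h3 h4 hu1
  have hb41 : b4 * b1 = (a4 * a1)⁻¹ := by
    rw [hb4, hb1]; exact inv_one_add_mul_mul_one_add_inv_rotate_mul h2 h3 h4 h1 hu2
  rw [hB1, mul_four_eq_inv_of_mul_eq_inv hb12 hb34, hB2, mul_four_eq_inv_of_mul_eq_inv hb23 hb41,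
    hB3, mul_four_eq_inv_of_mul_eq_inv hb34 hb12, hB4, mul_four_eq_inv_of_mul_eq_inv hb41 hb23,
    hb1, hb2, hb3, hb4, inv_inv, inv_inv]
  exact ⟨(one_add_inv_ne_zero hu3).isUnit, (one_add_inv_ne_zero hu4).isUnit,
    (one_add_inv_ne_zero hu1).isUnit, (one_add_inv_ne_zero hu2).isUnit,
    ((semiconjBy_one_add_inv_rotate a1 a2 a3 a4).mul_mul_inv_cancel (one_add_inv_ne_zero hu1)).symm,
    ((semiconjBy_one_add_rotate a2 a3 a4 a1).inv_mul_mul_cancel hu2).symm,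
    ((semiconjBy_one_add_inv_rotate a3 a4 a1 a2).mul_mul_inv_cancel (one_add_inv_ne_zero hu3)).symm,
    ((semiconjBy_one_add_rotate a4 a1 a2 a3).inv_mul_mul_cancel hu4).symm⟩
end

section
/- Let R be a skew field and t_{ba}, t_{cb}, t_{dc}, t_{ad} units of R (the parallel transports of a flat R-line bundle along the arcs of the square graph α with ∘-vertices a, b, c, d). Define M_a := -(t_{ad}·t_{dc}·t_{cb}·t_{ba}), M_b := -(t_{ba}·t_{ad}·t_{dc}·t_{cb}), M_c := -(t_{cb}·t_{ba}·t_{ad}·t_{dc}), M_d := -(t_{dc}·t_{cb}·t_{ba}·t_{ad}) (minus the counterclockwise monodromies at the four vertices). Assume 1 + M_b is a unit (equivalently each 1 + M_v is a unit, these being pairwise conjugate). Define the transformed transports t'_{ba} := (1 + M_b)·t_{ba}, t'_{cb} := t_{cb}·(1 + M_b)^{-1}, t'_{dc} := (1 + M_d)·t_{dc}, t'_{ad} := t_{ad}·(1 + M_d)^{-1}, and let M'_a, M'_b, M'_c, M'_d be defined from the primed transports by the same formulas. Then M'_a = M_a, M'_b = M_b, M'_c = M_c, and M'_d = M_d. 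-/
/-!
Write `u = 1 + M_b` and `v = 1 + M_d`. Around the vertices `a` and `c` the factors `u`, `u⁻¹` and
`v`, `v⁻¹` meet and cancel, so `M_a` and `M_c` are unchanged. Around `b` (resp. `d`) they
survive only at the two ends, so `M_b` (resp. `M_d`) is conjugated by `u` (resp. `v`), which
commutes with it. The cancellations need `v ≠ 0`, which follows from `u ≠ 0`: with
`x = t_{ba} t_{ad}` and `y = t_{dc} t_{cb}` one has `u = 1 - x y`, `v = 1 - y x`, and
`(1 - x y) x = x (1 - y x)`.
-/

section GroupWithZero

variable {G₀ : Type*} [GroupWithZero G₀]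

theorem Commute.mul_inv_cancel₀ {u m : G₀} (h : Commute u m) (hu : u ≠ 0) :
    u * m * u⁻¹ = m := by
  rw [h.eq, mul_inv_cancel_right₀ hu]

theorem mul_inv_mul_mul_mul_inv_mul {u v : G₀} (hu : u ≠ 0) (hv : v ≠ 0) (p q r s : G₀) :
    p * u⁻¹ * (u * q) * (r * v⁻¹) * (v * s) = p * q * r * s := by
  simp only [mul_assoc, inv_mul_cancel_left₀ hu, inv_mul_cancel_left₀ hv]

theorem mul_mul_mul_inv_mul_mul_mul_inv {v : G₀} (hv : v ≠ 0) (u p q r s : G₀) :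
    u * p * (q * v⁻¹) * (v * r) * (s * u⁻¹) = u * (p * q * r * s) * u⁻¹ := by
  simp only [mul_assoc, inv_mul_cancel_left₀ hv]

end GroupWithZero

theorem one_sub_mul_ne_zero_comm {R : Type*} [Ring R] [NoZeroDivisors R] [Nontrivial R] {x y : R}
    (h : 1 - x * y ≠ 0) : 1 - y * x ≠ 0 := by
  intro hyx
  have hx : x = 0 := by
    have hswap : (1 - x * y) * x = x * (1 - y * x) := by noncomm_ring
    rw [hyx, mul_zero] at hswap
    exact (mul_eq_zero.mp hswap).resolve_left h
  simp [hx] at hyx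

theorem two_by_two_move_preserves_monodromies_general
    {R : Type*} [DivisionRing R]
    (tba tcb tdc tad : R)
    (Ma Mb Mc Md : R)
    (hMa : Ma = -(tad * tdc * tcb * tba)) (hMb : Mb = -(tba * tad * tdc * tcb))
    (hMc : Mc = -(tcb * tba * tad * tdc)) (hMd : Md = -(tdc * tcb * tba * tad))
    (hu : IsUnit (1 + Mb))
    (tba' tcb' tdc' tad' : R)
    (hba' : tba' = (1 + Mb) * tba) (hcb' : tcb' = tcb * (1 + Mb)⁻¹)
    (hdc' : tdc' = (1 + Md) * tdc) (had' : tad' = tad * (1 + Md)⁻¹)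
    (Ma' Mb' Mc' Md' : R)
    (hMa' : Ma' = -(tad' * tdc' * tcb' * tba')) (hMb' : Mb' = -(tba' * tad' * tdc' * tcb'))
    (hMc' : Mc' = -(tcb' * tba' * tad' * tdc')) (hMd' : Md' = -(tdc' * tcb' * tba' * tad')) :
    Ma' = Ma ∧ Mb' = Mb ∧ Mc' = Mc ∧ Md' = Md := by
  have hb : 1 + Mb ≠ 0 := hu.ne_zero
  have hd : 1 + Md ≠ 0 := by
    have hb' : 1 - tba * tad * (tdc * tcb) ≠ 0 := by
      rwa [hMb, ← sub_eq_add_neg, mul_assoc (tba * tad)] at hb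
    have hd' := one_sub_mul_ne_zero_comm hb'
    rwa [hMd, ← sub_eq_add_neg, mul_assoc (tdc * tcb)]
  have conj_self {M : R} (h : 1 + M ≠ 0) : (1 + M) * M * (1 + M)⁻¹ = M :=
    ((Commute.one_left M).add_left (Commute.refl M)).mul_inv_cancel₀ h
  refine ⟨?_, ?_, ?_, ?_⟩
  · rw [hMa', had', hdc', hcb', hba', mul_inv_mul_mul_mul_inv_mul hd hb, hMa]
  · rw [hMb', hba', had', hdc', hcb', mul_mul_mul_inv_mul_mul_mul_inv hd, ← neg_mul, ← mul_neg,
      ← hMb, conj_self hb]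
  · rw [hMc', hcb', hba', had', hdc', mul_inv_mul_mul_mul_inv_mul hb hd, hMc]
  · rw [hMd', hdc', hcb', hba', had', mul_mul_mul_inv_mul_mul_mul_inv hb, ← neg_mul, ← mul_neg,
      ← hMd, conj_self hd]

/-- The two-by-two move on the parallel transports of a flat `R`-line bundle on the
square graph preserves the (minus) monodromies at the four `∘`-vertices:
`M'_a = M_a`, `M'_b = M_b`, `M'_c = M_c`, `M'_d = M_d`. -/
theorem two_by_two_move_preserves_monodromies
    {R : Type*} [DivisionRing R]
    (tba tcb tdc tad : R)
    (h1 : IsUnit tba) (h2 : IsUnit tcb) (h3 : IsUnit tdc) (h4 : IsUnit tad)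
    (Ma Mb Mc Md : R)
    (hMa : Ma = -(tad * tdc * tcb * tba)) (hMb : Mb = -(tba * tad * tdc * tcb))
    (hMc : Mc = -(tcb * tba * tad * tdc)) (hMd : Md = -(tdc * tcb * tba * tad))
    (hu : IsUnit (1 + Mb))
    (tba' tcb' tdc' tad' : R)
    (hba' : tba' = (1 + Mb) * tba) (hcb' : tcb' = tcb * (1 + Mb)⁻¹)
    (hdc' : tdc' = (1 + Md) * tdc) (had' : tad' = tad * (1 + Md)⁻¹)
    (Ma' Mb' Mc' Md' : R)
    (hMa' : Ma' = -(tad' * tdc' * tcb' * tba')) (hMb' : Mb' = -(tba' * tad' * tdc' * tcb'))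
    (hMc' : Mc' = -(tcb' * tba' * tad' * tdc')) (hMd' : Md' = -(tdc' * tcb' * tba' * tad')) :
    Ma' = Ma ∧ Mb' = Mb ∧ Mc' = Mc ∧ Md' = Md :=
  two_by_two_move_preserves_monodromies_general tba tcb tdc tad Ma Mb Mc Md hMa hMb hMc hMd hu tba'
    tcb' tdc' tad' hba' hcb' hdc' had' Ma' Mb' Mc' Md' hMa' hMb' hMc' hMd'
end

section
/- Let R be a skew field, V a 2-dimensional R-vector space, and a, b, c, d nonzero vectors of V spanning four pairwise distinct lines Ra, Rb, Rc, Rd, with a and b linearly independent over R. Suppose X ∈ R satisfies a + b + d = 0 and d + c + X·b = 0. Suppose further that a', b', c', d' are nonzero vectors with a' = a, b' ∈ Rb, c' ∈ Rc, d' ∈ Rd, and that Y ∈ R satisfies a' + b' + c' = 0 and a' + d' + Y·c' = 0. Then X is a unit of R, Y = X^{-1}, and b' = (1 - X)·b, c' = -c, d' = (1 - X^{-1})·d. -/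
/-!
The first two relations express everything in terms of `a` and `b`: `d = -a - b` and
`c = a + (1 - X) • b`. Writing `b' = β • b`, `c' = γ • c`, `d' = δ • d`, the relations among
`a', b', c', d'` become two linear relations between `a` and `b`; comparing coefficients gives
`γ = -1`, `β = 1 - X`, `δ = 1 - Y` and `Y * X = 1`, which in a division ring forces `Y = X⁻¹`.
-/

namespace LinearIndependent

variable {R V : Type*} [Ring R] [AddCommGroup V] [Module R V] {a b c d : V} {X : R}

theorem solve_relation_abc (hab : LinearIndependent R ![a, b]) (hc : c = a + (1 - X) • b)
    {β γ : R} (h : a + β • b + γ • c = 0) : γ = -1 ∧ β = 1 - X := by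
  obtain ⟨hγ, hβ⟩ := pair_iff.mp hab (1 + γ) (β + γ * (1 - X)) <| by
    rw [← h, hc]; match_scalars <;> noncomm_ring
  obtain rfl : γ = -1 := eq_neg_of_add_eq_zero_right hγ
  rw [neg_one_mul] at hβ
  exact ⟨rfl, add_neg_eq_zero.mp hβ⟩

theorem solve_relation_adc (hab : LinearIndependent R ![a, b]) (hd : d = -a - b)
    (hc : c = a + (1 - X) • b) {δ Y : R} (h : a + δ • d + Y • -c = 0) :
    δ = 1 - Y ∧ Y * X = 1 := by
  obtain ⟨ha, hb⟩ := pair_iff.mp hab (1 - δ - Y) (-δ - Y * (1 - X)) <| by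
    rw [← h, hd, hc]; match_scalars <;> noncomm_ring
  have hδ : δ = 1 - Y := by rw [← sub_eq_zero, ← neg_eq_zero, ← ha]; noncomm_ring
  refine ⟨hδ, sub_eq_zero.mp ?_⟩
  rw [← hb, hδ]; noncomm_ring

end LinearIndependent

theorem two_by_two_move_line_configurations_general
    {R V : Type*} [DivisionRing R] [AddCommGroup V] [Module R V]
    (a b c d : V)
    (hind : LinearIndependent R ![a, b])
    (X : R) (h1 : a + b + d = 0) (h2 : d + c + X • b = 0)
    (a' b' c' d' : V)
    (haa : a' = a)
    (hbb : b' ∈ Submodule.span R ({b} : Set V))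
    (hcc : c' ∈ Submodule.span R ({c} : Set V))
    (hdd : d' ∈ Submodule.span R ({d} : Set V))
    (Y : R) (h3 : a' + b' + c' = 0) (h4 : a' + d' + Y • c' = 0) :
    IsUnit X ∧ Y = X⁻¹ ∧ b' = (1 - X) • b ∧ c' = -c ∧ d' = (1 - X⁻¹) • d := by
  obtain ⟨β, rfl⟩ := Submodule.mem_span_singleton.mp hbb
  obtain ⟨γ, rfl⟩ := Submodule.mem_span_singleton.mp hcc
  obtain ⟨δ, rfl⟩ := Submodule.mem_span_singleton.mp hdd
  subst a'
  have hd : d = -a - b := by linear_combination (norm := abel) h1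
  have hc : c = a + (1 - X) • b := by
    rw [sub_smul, one_smul]
    linear_combination (norm := abel) h2 - h1
  obtain ⟨rfl, hβ⟩ := hind.solve_relation_abc hc h3
  rw [smul_smul, mul_neg_one, neg_smul, ← smul_neg] at h4
  obtain ⟨hδ, hYX⟩ := hind.solve_relation_adc hd hc h4
  have hY : Y = X⁻¹ := (inv_eq_of_mul_eq_one_left hYX).symm
  exact ⟨IsUnit.mk0 X (right_ne_zero_of_mul_eq_one hYX), hY, by rw [hβ], neg_one_smul R c,
    by rw [hδ, hY]⟩

/-- Calculation of the two-by-two move for configurations of four lines in a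
2-dimensional vector space over a skew field `R`: if `a + b + d = 0`, `d + c + X•b = 0`,
`a' = a`, `b' ∈ Rb`, `c' ∈ Rc`, `d' ∈ Rd` are nonzero with `a' + b' + c' = 0` and
`a' + d' + Y•c' = 0`, then `X` is a unit, `Y = X⁻¹`, `b' = (1-X)•b`, `c' = -c`, and
`d' = (1-X⁻¹)•d`. -/
theorem two_by_two_move_line_configurations
    {R V : Type*} [DivisionRing R] [AddCommGroup V] [Module R V]
    (hV : Module.finrank R V = 2)
    (a b c d : V) (ha : a ≠ 0) (hb : b ≠ 0) (hc : c ≠ 0) (hd : d ≠ 0)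
    (hab : Submodule.span R {a} ≠ Submodule.span R {b})
    (hac : Submodule.span R {a} ≠ Submodule.span R {c})
    (had : Submodule.span R {a} ≠ Submodule.span R {d})
    (hbc : Submodule.span R {b} ≠ Submodule.span R {c})
    (hbd : Submodule.span R {b} ≠ Submodule.span R {d})
    (hcd : Submodule.span R {c} ≠ Submodule.span R {d})
    (hind : LinearIndependent R ![a, b])
    (X : R) (h1 : a + b + d = 0) (h2 : d + c + X • b = 0)
    (a' b' c' d' : V)
    (ha' : a' ≠ 0) (hb' : b' ≠ 0) (hc' : c' ≠ 0) (hd' : d' ≠ 0)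
    (haa : a' = a)
    (hbb : b' ∈ Submodule.span R ({b} : Set V))
    (hcc : c' ∈ Submodule.span R ({c} : Set V))
    (hdd : d' ∈ Submodule.span R ({d} : Set V))
    (Y : R) (h3 : a' + b' + c' = 0) (h4 : a' + d' + Y • c' = 0) :
    IsUnit X ∧ Y = X⁻¹ ∧ b' = (1 - X) • b ∧ c' = -c ∧ d' = (1 - X⁻¹) • d :=
  two_by_two_move_line_configurations_general a b c d hind X h1 h2 a' b' c' d' haa hbb hcc hdd Y h3
    h4
end
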